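/- arXiv:0902.1284 — 4 statements merged into one kernel-verified Lean document; each statement's English description precedes it below -/
import Mathlib

section
/- Let A = [a₁ | … | a_d] ∈ ℝ^{m×d} have unit ℓ₂-norm columns with coherence μ(A) ≤ 0.1/k, and let h ∈ ℝ^m. Run Orthogonal Matching Pursuit for 2k steps starting from the zero vector: maintain a selected index set J (initially empty) and a current solution; at each step select an index j* maximizing |a_jᵀ r| over all columns, where r is the current residual h − A·(current solution), add j* to J, and set the new solution to a minimizer of ‖h − Ay‖₂ over vectors y supported on J, with residual r updated accordingly. Then the vector ŷ produced after 2k steps (which is 2k-sparse) satisfies ‖Aŷ − h‖₂² ≤ 23·‖A y_{(1:k)} − h‖₂² for every y ∈ ℝ^d. -/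
open Real MeasureTheory ProbabilityTheory

/-- The Euclidean (ℓ₂) norm of a vector in `ℝ^n`. -/
noncomputable def l2 {n : ℕ} (v : Fin n → ℝ) : ℝ := Real.sqrt (∑ i, v i ^ 2)

/-- The ℓ₁ norm of a vector in `ℝ^n`. -/
def l1 {n : ℕ} (v : Fin n → ℝ) : ℝ := ∑ i, |v i|

/-- A vector is `k`-sparse if it has at most `k` nonzero entries. -/
def Sparse {n : ℕ} (k : ℕ) (v : Fin n → ℝ) : Prop :=
  (Finset.univ.filter fun i => v i ≠ 0).card ≤ k

/-- `(k,δ)`-restricted isometry property. -/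
def RIP {m d : ℕ} (k : ℕ) (δ : ℝ) (A : Matrix (Fin m) (Fin d) ℝ) : Prop :=
  ∀ x : Fin d → ℝ, Sparse k x →
    (1 - δ) * l2 x ^ 2 ≤ l2 (A.mulVec x) ^ 2 ∧ l2 (A.mulVec x) ^ 2 ≤ (1 + δ) * l2 x ^ 2

/-- `z` is a best `k`-sparse approximation `y_{(1:k)}` of `y`: it keeps the `k`
largest-magnitude coordinates of `y` (all coordinates if `k ≥ d`) and zeros the rest. -/
def IsBestApprox {d : ℕ} (k : ℕ) (y z : Fin d → ℝ) : Prop :=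
  ∃ S : Finset (Fin d), S.card = min k d ∧
    (∀ i ∈ S, ∀ j ∉ S, |y j| ≤ |y i|) ∧
    ∀ i, z i = if i ∈ S then y i else 0

/-!
Suppose the bound fails, and let `e = A z - h` for the `k`-sparse `z`, supported on `S`. Then
every intermediate residual `rᵢ` is longer than `√23 ‖e‖`; in particular each greedy pick is a
new index, and `rᵢ` is orthogonal to the columns selected so far. Coherence `μ ≤ 0.1 / k` makes
`A` a near-isometry (constant `0.2`) on any `2k` columns. From this, a pick outside `S`, made
while at most `k` wrong picks have occurred, is a column whose correlation with `e` exceeds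
`√(1.1 / k) ‖e‖`. At most `k` of the `2k` picks lie in `S`, so there are at least `k` wrong
picks; the first `k` of them give `k` columns with squared correlations with `e` summing to more
than `1.1 ‖e‖²`, while coherence bounds such a sum over `k` columns by `(1 + 0.1) ‖e‖²`.
-/

open Finset RealInnerProductSpace

variable {E ι : Type*} [NormedAddCommGroup E] [InnerProductSpace ℝ E]

theorem sum_abs_le_sqrt_card_mul_sqrt_sum_sq (s : Finset ι) (f : ι → ℝ) :
    ∑ i ∈ s, |f i| ≤ √(#s : ℝ) * √(∑ i ∈ s, f i ^ 2) := by
  rw [← Real.sqrt_mul (Nat.cast_nonneg _)]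
  refine Real.le_sqrt_of_sq_le ?_
  simpa only [sq_abs] using sq_sum_le_card_mul_sum_sq (s := s) (f := fun i => |f i|)

theorem inner_eq_zero_of_norm_le_norm_sub {v r : E} (hv : ‖v‖ = 1)
    (hr : ‖r‖ ≤ ‖r - ⟪v, r⟫ • v‖) : ⟪v, r⟫ = 0 := by
  have : ‖r - ⟪v, r⟫ • v‖ ^ 2 = ‖r‖ ^ 2 - ⟪v, r⟫ ^ 2 := by
    rw [norm_sub_sq_real, real_inner_smul_right, norm_smul, hv, real_inner_comm, mul_one,
      Real.norm_eq_abs, sq_abs]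
    ring
  nlinarith [pow_le_pow_left₀ (norm_nonneg r) hr 2]

theorem abs_inner_sum_smul_le_of_inner_eq_zero [DecidableEq ι] {a : ι → E} {R : E} {J : Finset ι}
    (horth : ∀ j ∈ J, ⟪a j, R⟫ = 0) {M : ℝ} (hM : ∀ j, |⟪a j, R⟫| ≤ M) (T : Finset ι)
    (x : ι → ℝ) : |⟪∑ j ∈ T, x j • a j, R⟫| ≤ M * ∑ j ∈ T \ J, |x j| := by
  rw [sum_inner, ← sum_subset sdiff_subset fun j _ hj => ?_, mul_sum]
  · refine (abs_sum_le_sum_abs _ _).trans (sum_le_sum fun j _ => ?_)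
    rw [real_inner_smul_left, abs_mul, mul_comm]
    exact mul_le_mul_of_nonneg_right (hM j) (abs_nonneg _)
  · rw [real_inner_smul_left, horth j (by simp_all), mul_zero]

structure IsCoherent (μ : ℝ) (a : ι → E) : Prop where
  norm_eq_one : ∀ j, ‖a j‖ = 1
  abs_inner_le : ∀ ⦃i j⦄, i ≠ j → |⟪a i, a j⟫| ≤ μ

namespace IsCoherent

variable {μ δ : ℝ} {a : ι → E}

theorem abs_norm_sq_sum_smul_sub_le (hcoh : IsCoherent μ a) (hμ : 0 ≤ μ) (T : Finset ι)
    (x : ι → ℝ) :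
    |‖∑ j ∈ T, x j • a j‖ ^ 2 - ∑ j ∈ T, x j ^ 2| ≤ μ * (#T - 1) * ∑ j ∈ T, x j ^ 2 := by
  classical
  have hexpand : ‖∑ j ∈ T, x j • a j‖ ^ 2 - ∑ j ∈ T, x j ^ 2
      = ∑ i ∈ T, ∑ j ∈ T, x i * x j * (⟪a i, a j⟫ - if i = j then 1 else 0) := by
    rw [← real_inner_self_eq_norm_sq, sum_inner]
    simp only [inner_sum, real_inner_smul_left, real_inner_smul_right, mul_sub, mul_ite, mul_one,
      mul_zero, sum_sub_distrib, sum_ite_eq, sum_ite_mem, inter_self, sq]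
    simp only [mul_assoc, mul_left_comm]
  have hterm : ∀ i j, |x i * x j * (⟪a i, a j⟫ - if i = j then 1 else 0)|
      ≤ μ * |x i| * |x j| - if i = j then μ * x i ^ 2 else 0 := by
    intro i j
    split_ifs with hij
    · subst hij
      simp [hcoh.norm_eq_one, ← sq, mul_assoc]
    · rw [sub_zero, sub_zero, abs_mul, abs_mul]
      nlinarith [hcoh.abs_inner_le hij, abs_nonneg (x i * x j), abs_mul (x i) (x j)]
  have hcs := sq_sum_le_card_mul_sum_sq (s := T) (f := fun j => |x j|)
  simp only [sq_abs] at hcs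
  calc _ ≤ ∑ i ∈ T, ∑ j ∈ T, (μ * |x i| * |x j| - if i = j then μ * x i ^ 2 else 0) := by
        rw [hexpand]
        exact (abs_sum_le_sum_abs _ _).trans
          (sum_le_sum fun i _ => (abs_sum_le_sum_abs _ _).trans (sum_le_sum fun j _ => hterm i j))
    _ = μ * ((∑ j ∈ T, |x j|) ^ 2 - ∑ j ∈ T, x j ^ 2) := by
        simp only [sum_sub_distrib, sum_ite_eq, sum_ite_mem, inter_self, sq, mul_sum, sum_mul,
          mul_sub]
        simp only [mul_left_comm, mul_comm]
    _ ≤ μ * (#T - 1) * ∑ j ∈ T, x j ^ 2 := by nlinarith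

theorem norm_sq_sum_smul_le (hcoh : IsCoherent μ a) (hμ : 0 ≤ μ) {T : Finset ι}
    (hδ : μ * (#T - 1) ≤ δ) (x : ι → ℝ) :
    ‖∑ j ∈ T, x j • a j‖ ^ 2 ≤ (1 + δ) * ∑ j ∈ T, x j ^ 2 := by
  have := (abs_le.mp (hcoh.abs_norm_sq_sum_smul_sub_le hμ T x)).2
  nlinarith [mul_le_mul_of_nonneg_right hδ (sum_nonneg (s := T) fun j _ => sq_nonneg (x j))]

theorem le_norm_sq_sum_smul (hcoh : IsCoherent μ a) (hμ : 0 ≤ μ) {T : Finset ι}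
    (hδ : μ * (#T - 1) ≤ δ) (x : ι → ℝ) :
    (1 - δ) * ∑ j ∈ T, x j ^ 2 ≤ ‖∑ j ∈ T, x j • a j‖ ^ 2 := by
  have := (abs_le.mp (hcoh.abs_norm_sq_sum_smul_sub_le hμ T x)).1
  nlinarith [mul_le_mul_of_nonneg_right hδ (sum_nonneg (s := T) fun j _ => sq_nonneg (x j))]

theorem sum_inner_sq_le (hcoh : IsCoherent μ a) (hμ : 0 ≤ μ) {T : Finset ι}
    (hδ0 : 0 ≤ δ) (hδ : μ * (#T - 1) ≤ δ) (v : E) :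
    ∑ j ∈ T, ⟪a j, v⟫ ^ 2 ≤ (1 + δ) * ‖v‖ ^ 2 := by
  set Q := ∑ j ∈ T, ⟪a j, v⟫ ^ 2
  set P := ∑ j ∈ T, ⟪a j, v⟫ • a j
  have hQ : Q = ⟪P, v⟫ := by simp only [Q, P, sum_inner, real_inner_smul_left, sq]
  have hP : ‖P‖ ^ 2 ≤ (1 + δ) * Q := hcoh.norm_sq_sum_smul_le hμ hδ _
  have hCS : Q ^ 2 ≤ ‖P‖ ^ 2 * ‖v‖ ^ 2 := by
    rw [← mul_pow, hQ, ← sq_abs]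
    exact pow_le_pow_left₀ (abs_nonneg _) (abs_real_inner_le_norm P v) 2
  rcases (show 0 ≤ Q by positivity).eq_or_lt with hQ0 | hQ0
  · rw [← hQ0]; positivity
  · nlinarith [mul_le_mul_of_nonneg_right hP (sq_nonneg ‖v‖)]

theorem abs_inner_sum_smul_le (hcoh : IsCoherent μ a) {T : Finset ι} {i : ι} (hi : i ∉ T)
    (x : ι → ℝ) : |⟪a i, ∑ j ∈ T, x j • a j⟫| ≤ μ * ∑ j ∈ T, |x j| := by
  rw [inner_sum, mul_sum]
  refine (abs_sum_le_sum_abs _ _).trans (sum_le_sum fun j hj => ?_)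
  rw [real_inner_smul_right, abs_mul, mul_comm]
  exact mul_le_mul_of_nonneg_right (hcoh.abs_inner_le (ne_of_mem_of_not_mem hj hi).symm)
    (abs_nonneg _)


theorem sqrt_mul_abs_inner_sum_smul_le (hcoh : IsCoherent μ a) (hμ : 0 ≤ μ) {k : ℕ}
    (hμk : μ * k ≤ 0.1) {T : Finset ι} (hT : #T ≤ 2 * k) {i : ι} (hi : i ∉ T) (w : ι → ℝ) :
    √k * |⟪a i, ∑ j ∈ T, w j • a j⟫| ≤ 0.15 * √(∑ j ∈ T, w j ^ 2) := by
  have hT' : (#T : ℝ) ≤ 2 * k := by exact_mod_cast hT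
  have hμT : μ * √(k * #T) ≤ 0.15 := by
    refine abs_le_of_sq_le_sq' ?_ (by norm_num) |>.2
    rw [mul_pow, Real.sq_sqrt (by positivity)]
    calc μ ^ 2 * (k * #T) ≤ μ ^ 2 * (k * (2 * k)) := by gcongr
      _ = 2 * (μ * k) ^ 2 := by ring
      _ ≤ 0.15 ^ 2 := by nlinarith [mul_nonneg hμ (Nat.cast_nonneg k : (0 : ℝ) ≤ k)]
  calc √k * |⟪a i, ∑ j ∈ T, w j • a j⟫|
      ≤ √k * (μ * (√(#T : ℝ) * √(∑ j ∈ T, w j ^ 2))) := by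
        gcongr
        exact (hcoh.abs_inner_sum_smul_le hi w).trans
          (mul_le_mul_of_nonneg_left (sum_abs_le_sqrt_card_mul_sqrt_sum_sq T w) hμ)
    _ = μ * √(k * #T) * √(∑ j ∈ T, w j ^ 2) := by
        rw [Real.sqrt_mul (Nat.cast_nonneg k)]; ring
    _ ≤ 0.15 * √(∑ j ∈ T, w j ^ 2) := by gcongr

theorem norm_sum_smul_le_of_greedy [DecidableEq ι] (hcoh : IsCoherent μ a) (hμ : 0 ≤ μ) {k : ℕ}
    (hμk : μ * k ≤ 0.1) {T J : Finset ι} (hT : #T ≤ 2 * k) (hTJ : #(T \ J) ≤ k) {e R : E}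
    {w : ι → ℝ} (hR : R = e + ∑ j ∈ T, w j • a j) (horth : ∀ j ∈ J, ⟪a j, R⟫ = 0) {i : ι}
    (hi : i ∉ T) (hmax : ∀ j, |⟪a j, R⟫| ≤ |⟪a i, R⟫|) :
    ‖∑ j ∈ T, w j • a j‖ ≤ 1.25 * ‖e‖ + 1.4 * (√k * |⟪a i, e⟫|) := by
  set P := ∑ j ∈ T, w j • a j
  set ω := √(∑ j ∈ T, w j ^ 2)
  have hrip : 0.8 * ω ^ 2 ≤ ‖P‖ ^ 2 := by
    have hT' : (#T : ℝ) ≤ 2 * k := by exact_mod_cast hT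
    have := hcoh.le_norm_sq_sum_smul hμ (δ := 0.2) (T := T) (by nlinarith) w
    rw [Real.sq_sqrt (by positivity)]; linarith
  -- `R` is orthogonal to the columns in `J`, so `⟪P, R⟫` only sees the coordinates in `T \ J`.
  have hPR : |⟪P, R⟫| ≤ |⟪a i, R⟫| * (√k * ω) := by
    refine (abs_inner_sum_smul_le_of_inner_eq_zero horth hmax T w).trans
      (mul_le_mul_of_nonneg_left ?_ (abs_nonneg _))
    refine (sum_abs_le_sqrt_card_mul_sqrt_sum_sq _ w).trans (mul_le_mul ?_ ?_ (by positivity)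
      (by positivity))
    · exact Real.sqrt_le_sqrt (by exact_mod_cast hTJ)
    · exact Real.sqrt_le_sqrt (sum_le_sum_of_subset_of_nonneg sdiff_subset fun _ _ _ => sq_nonneg _)
  have hPP : ‖P‖ ^ 2 ≤ ‖P‖ * ‖e‖ + |⟪a i, R⟫| * (√k * ω) := by
    have : ‖P‖ ^ 2 = ⟪P, R⟫ - ⟪P, e⟫ := by
      rw [hR, inner_add_right, real_inner_self_eq_norm_sq]; ring
    linarith [le_abs_self ⟪P, R⟫, neg_abs_le ⟪P, e⟫, abs_real_inner_le_norm P e]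
  have hRi : √k * |⟪a i, R⟫| ≤ √k * |⟪a i, e⟫| + 0.15 * ω := by
    have := hcoh.sqrt_mul_abs_inner_sum_smul_le hμ hμk hT hi w
    rw [hR, inner_add_right]
    nlinarith [abs_add_le ⟪a i, e⟫ ⟪a i, P⟫, Real.sqrt_nonneg k]
  set C := √k * |⟪a i, e⟫|
  have hω : ω ≤ 1.12 * ‖P‖ := abs_le_of_sq_le_sq' (by nlinarith) (by positivity) |>.2
  have hP : ‖P‖ ^ 2 ≤ ‖P‖ * ‖e‖ + 1.12 * C * ‖P‖ + 0.1875 * ‖P‖ ^ 2 := by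
    nlinarith [mul_le_mul_of_nonneg_right hRi (by positivity : 0 ≤ ω),
      mul_le_mul_of_nonneg_left hω (by positivity : 0 ≤ C)]
  rcases (norm_nonneg P).eq_or_lt with hP0 | hP0
  · rw [← hP0]; positivity
  · nlinarith

theorem mul_norm_sq_lt_mul_inner_sq [DecidableEq ι] (hcoh : IsCoherent μ a) (hμ : 0 ≤ μ)
    {k : ℕ} (hμk : μ * k ≤ 0.1) {T J : Finset ι} (hT : #T ≤ 2 * k) (hTJ : #(T \ J) ≤ k)
    {e R : E} {w : ι → ℝ} (hR : R = e + ∑ j ∈ T, w j • a j) (horth : ∀ j ∈ J, ⟪a j, R⟫ = 0)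
    {i : ι} (hi : i ∉ T) (hmax : ∀ j, |⟪a j, R⟫| ≤ |⟪a i, R⟫|)
    (hbig : 23 * ‖e‖ ^ 2 < ‖R‖ ^ 2) : 1.1 * ‖e‖ ^ 2 < k * ⟪a i, e⟫ ^ 2 := by
  have hP := hcoh.norm_sum_smul_le_of_greedy hμ hμk hT hTJ hR horth hi hmax
  have hRe : ‖R‖ ≤ ‖e‖ + ‖∑ j ∈ T, w j • a j‖ := hR ▸ norm_add_le _ _
  rw [← sq_abs ⟪a i, e⟫, ← Real.sq_sqrt (Nat.cast_nonneg k), ← mul_pow]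
  set C := √k * |⟪a i, e⟫|
  have hR2 : ‖R‖ ^ 2 ≤ (2.25 * ‖e‖ + 1.4 * C) ^ 2 :=
    pow_le_pow_left₀ (norm_nonneg _) (by linarith) 2
  by_contra! hC
  have : C ≤ 1.05 * ‖e‖ := abs_le_of_sq_le_sq' (by nlinarith) (by positivity) |>.2
  nlinarith [norm_nonneg e, (by positivity : 0 ≤ C)]

end IsCoherent

namespace OMP

variable [Fintype ι] {a : ι → E} {h : E}

noncomputable def residual (a : ι → E) (h : E) (x : ι → ℝ) : E := h - ∑ j, x j • a j

theorem residual_eq_add_sum [DecidableEq ι] {S J : Finset ι} {x z : ι → ℝ}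
    (hx : ∀ c ∉ J, x c = 0) (hz : ∀ c ∉ S, z c = 0) :
    residual a h x = residual a h z + ∑ j ∈ S ∪ J, (z - x) j • a j := by
  rw [sum_subset (subset_univ _) fun c _ hc => ?_]
  · simp only [residual, Pi.sub_apply, sub_smul, sum_sub_distrib]; abel
  · simp only [mem_union, not_or] at hc
    simp [hx c hc.2, hz c hc.1]

theorem norm_residual_le_of_forall_inner_eq_zero {x : ι → ℝ}
    (hx : ∀ j, ⟪a j, residual a h x⟫ = 0) (z : ι → ℝ) :
    ‖residual a h x‖ ≤ ‖residual a h z‖ := by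
  have hz : residual a h z = residual a h x - ∑ j, (z - x) j • a j := by
    simp only [residual, Pi.sub_apply, sub_smul, sum_sub_distrib]; abel
  have h0 : ⟪residual a h x, ∑ j, (z - x) j • a j⟫ = 0 := by
    simp only [inner_sum, real_inner_smul_right, real_inner_comm (a _), hx, mul_zero,
      sum_const_zero]
  refine pow_le_pow_iff_left₀ (norm_nonneg _) (norm_nonneg _) two_ne_zero |>.1 ?_
  rw [hz, norm_sub_sq_real, h0]
  nlinarith [sq_nonneg ‖∑ j, (z - x) j • a j‖]

variable [DecidableEq ι]

def IsStep (a : ι → E) (h : E) (J J' : Finset ι) (x x' : ι → ℝ) : Prop :=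
  ∃ j, (∀ j', |⟪a j', residual a h x⟫| ≤ |⟪a j, residual a h x⟫|) ∧ J' = insert j J ∧
    (∀ c ∉ J', x' c = 0) ∧
    ∀ z : ι → ℝ, (∀ c ∉ J', z c = 0) → ‖residual a h x'‖ ≤ ‖residual a h z‖

namespace IsStep

variable {J J' : Finset ι} {x x' : ι → ℝ}

theorem subset (hs : IsStep a h J J' x x') : J ⊆ J' := by
  obtain ⟨j, -, rfl, -⟩ := hs
  exact subset_insert j J

theorem support (hs : IsStep a h J J' x x') : ∀ c ∉ J', x' c = 0 := hs.choose_spec.2.2.1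

theorem norm_residual_le (hs : IsStep a h J J' x x') {z : ι → ℝ} (hz : ∀ c ∉ J', z c = 0) :
    ‖residual a h x'‖ ≤ ‖residual a h z‖ := hs.choose_spec.2.2.2 z hz

theorem inner_residual_eq_zero (hs : IsStep a h J J' x x') (ha : ∀ j, ‖a j‖ = 1) {j : ι}
    (hj : j ∈ J') : ⟪a j, residual a h x'⟫ = 0 := by
  refine inner_eq_zero_of_norm_le_norm_sub (ha j) ?_
  have : residual a h x' - ⟪a j, residual a h x'⟫ • a j
      = residual a h (x' + Pi.single j ⟪a j, residual a h x'⟫) := by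
    simp [residual, add_smul, sum_add_distrib, Pi.single_apply, ite_smul, sub_add_eq_sub_sub]
  rw [this]
  refine hs.norm_residual_le fun c hc => ?_
  rw [Pi.add_apply, hs.support c hc, Pi.single_eq_of_ne (ne_of_mem_of_not_mem hj hc).symm, add_zero]

theorem abs_inner_le_of_mem_sdiff (hs : IsStep a h J J' x x') {j : ι} (hj : j ∈ J' \ J)
    (j' : ι) : |⟪a j', residual a h x⟫| ≤ |⟪a j, residual a h x⟫| := by
  obtain ⟨i, hi, rfl, -⟩ := hs
  obtain rfl : j = i := by rw [mem_sdiff, mem_insert] at hj; tauto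
  exact hi j'

theorem card_sdiff_le (hs : IsStep a h J J' x x') (S : Finset ι) :
    #(J' \ S) ≤ #(J \ S) + 1 := by
  obtain ⟨i, -, rfl, -⟩ := hs
  by_cases hi : i ∈ S
  · rw [insert_sdiff_of_mem _ hi]; omega
  · rw [insert_sdiff_of_notMem _ hi]; exact card_insert_le _ _

theorem card_eq (hs : IsStep a h J J' x x')
    (horth : ∀ j ∈ J, ⟪a j, residual a h x⟫ = 0) {z : ι → ℝ}
    (hz : ‖residual a h z‖ < ‖residual a h x‖) : #J' = #J + 1 := by
  obtain ⟨i, hi, rfl, -⟩ := hs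
  refine card_insert_of_notMem fun hiJ => hz.not_ge ?_
  refine norm_residual_le_of_forall_inner_eq_zero (fun j => ?_) z
  simpa [horth i hiJ] using hi j

end IsStep

structure IsRun (a : ι → E) (h : E) (n : ℕ) (J : ℕ → Finset ι) (y : ℕ → ι → ℝ) : Prop where
  J_zero : J 0 = ∅
  y_zero : y 0 = 0
  step : ∀ i < n, IsStep a h (J i) (J (i + 1)) (y i) (y (i + 1))

namespace IsRun

variable {n : ℕ} {J : ℕ → Finset ι} {y : ℕ → ι → ℝ}

theorem support (run : IsRun a h n J y) {i : ℕ} (hi : i ≤ n) : ∀ c ∉ J i, y i c = 0 := by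
  rcases i with _ | i
  · simp [run.y_zero]
  · exact (run.step i hi).support

theorem monotoneOn (run : IsRun a h n J y) : MonotoneOn J (Set.Iic n) :=
  monotoneOn_of_le_succ Set.ordConnected_Iic fun i _ _ hi =>
    (run.step i (by simpa [Order.succ_eq_add_one] using hi)).subset

theorem antitoneOn_norm_residual (run : IsRun a h n J y) :
    AntitoneOn (fun i => ‖residual a h (y i)‖) (Set.Iic n) :=
  antitoneOn_of_succ_le Set.ordConnected_Iic fun i _ hi hi1 => by
    have hs := run.step i (by simpa [Order.succ_eq_add_one] using hi1)
    exact hs.norm_residual_le fun c hc => run.support hi c fun hcJ => hc (hs.subset hcJ)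

theorem inner_residual_eq_zero (run : IsRun a h n J y) (ha : ∀ j, ‖a j‖ = 1) {i : ℕ}
    (hi : i ≤ n) {j : ι} (hj : j ∈ J i) : ⟪a j, residual a h (y i)⟫ = 0 := by
  rcases i with _ | i
  · simp [run.J_zero] at hj
  · exact (run.step i hi).inner_residual_eq_zero ha hj

theorem card_eq (run : IsRun a h n J y) (ha : ∀ j, ‖a j‖ = 1) {z : ι → ℝ}
    (hz : ‖residual a h z‖ < ‖residual a h (y n)‖) {i : ℕ} (hi : i ≤ n) : #(J i) = i := by
  induction i with
  | zero => simp [run.J_zero]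
  | succ i ih =>
    have hres : ‖residual a h (y n)‖ ≤ ‖residual a h (y i)‖ :=
      run.antitoneOn_norm_residual (show i ∈ Set.Iic n by simp; omega) (by simp) (by omega)
    rw [(run.step i hi).card_eq (fun j => run.inner_residual_eq_zero ha (by omega))
      (hz.trans_le hres), ih (by omega)]

theorem exists_mem_sdiff (run : IsRun a h n J y) {i : ℕ} {j : ι} (hj : j ∈ J i) :
    ∃ i' < i, j ∈ J (i' + 1) \ J i' := by
  obtain ⟨i', hi', hi'1⟩ := Nat.exists_not_and_succ_of_not_zero_of_exists
    (p := fun i' => i' ≤ i ∧ j ∈ J i') (by simp [run.J_zero]) ⟨i, le_rfl, hj⟩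
  exact ⟨i', hi'1.1, mem_sdiff.2 ⟨hi'1.2, fun h => hi' ⟨by omega, h⟩⟩⟩

theorem exists_card_sdiff_eq (run : IsRun a h n J y) (S : Finset ι) {k : ℕ} (hk0 : 0 < k)
    (hk : k ≤ #(J n \ S)) : ∃ i ≤ n, #(J i \ S) = k := by
  obtain ⟨i, hi, hi1⟩ := Nat.exists_not_and_succ_of_not_zero_of_exists
    (p := fun i => i ≤ n ∧ k ≤ #(J i \ S)) (by simp [run.J_zero]; omega) ⟨n, le_rfl, hk⟩
  have := (run.step i hi1.1).card_sdiff_le S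
  exact ⟨i + 1, hi1.1, by omega⟩

theorem mul_norm_sq_lt_mul_inner_sq (run : IsRun a h n J y) {μ : ℝ} (hcoh : IsCoherent μ a)
    (hμ : 0 ≤ μ) {k : ℕ} (hμk : μ * k ≤ 0.1) {S : Finset ι} (hS : #S ≤ k) {z : ι → ℝ}
    (hz : ∀ c ∉ S, z c = 0) {i : ℕ} (hi : i < n) (hJS : #(J i \ S) ≤ k) {j : ι}
    (hj : j ∈ J (i + 1) \ J i) (hjS : j ∉ S)
    (hbig : 23 * ‖residual a h z‖ ^ 2 < ‖residual a h (y i)‖ ^ 2) :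
    1.1 * ‖residual a h z‖ ^ 2 < k * ⟪a j, residual a h z⟫ ^ 2 := by
  have hT : #(S ∪ J i) ≤ 2 * k := by
    rw [union_comm, ← card_sdiff_add_card]; omega
  have hTJ : #((S ∪ J i) \ J i) ≤ k := by
    rw [union_sdiff_right]; exact (card_le_card sdiff_subset).trans hS
  exact hcoh.mul_norm_sq_lt_mul_inner_sq hμ hμk hT hTJ (residual_eq_add_sum (run.support hi.le) hz)
    (fun _ => run.inner_residual_eq_zero hcoh.norm_eq_one hi.le)
    (by simp [hjS, (mem_sdiff.1 hj).2]) ((run.step i hi).abs_inner_le_of_mem_sdiff hj) hbig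

theorem sq_norm_residual_le {k : ℕ} (run : IsRun a h (2 * k) J y) {μ : ℝ}
    (hcoh : IsCoherent μ a) (hμ : 0 ≤ μ) (hμk : μ * k ≤ 0.1) (hk : 0 < k) {S : Finset ι}
    (hS : #S ≤ k) {z : ι → ℝ} (hz : ∀ c ∉ S, z c = 0) :
    ‖residual a h (y (2 * k))‖ ^ 2 ≤ 23 * ‖residual a h z‖ ^ 2 := by
  set e := residual a h z
  by_contra! hbig
  have hbig' : ∀ i ≤ 2 * k, 23 * ‖e‖ ^ 2 < ‖residual a h (y i)‖ ^ 2 := fun i hi =>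
    hbig.trans_le (pow_le_pow_left₀ (norm_nonneg _)
      (run.antitoneOn_norm_residual (show i ∈ Set.Iic _ from hi) (by simp) hi) 2)
  have hlt : ‖e‖ < ‖residual a h (y (2 * k))‖ :=
    lt_of_pow_lt_pow_left₀ 2 (norm_nonneg _) (by nlinarith [sq_nonneg ‖e‖])
  have hcard : k ≤ #(J (2 * k) \ S) := by
    have := le_card_sdiff S (J (2 * k))
    rw [run.card_eq hcoh.norm_eq_one hlt le_rfl] at this
    omega
  obtain ⟨i₀, hi₀, hcard₀⟩ := run.exists_card_sdiff_eq S hk hcard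
  have hW : ∀ j ∈ J i₀ \ S, 1.1 * ‖e‖ ^ 2 < k * ⟪a j, e⟫ ^ 2 := by
    -- `j` was picked at a step `i < i₀`, when at most `#(J i₀ \ S) = k` wrong picks had been made.
    intro j hj
    obtain ⟨i, hi, hji⟩ := run.exists_mem_sdiff (mem_sdiff.1 hj).1
    have hJi : J i ⊆ J i₀ :=
      run.monotoneOn (show i ∈ Set.Iic _ by simp; omega) (show i₀ ∈ Set.Iic _ from hi₀) hi.le
    exact run.mul_norm_sq_lt_mul_inner_sq hcoh hμ hμk hS hz (by omega)
      (hcard₀ ▸ card_le_card (sdiff_subset_sdiff hJi subset_rfl)) hji (mem_sdiff.1 hj).2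
      (hbig' i (by omega))
  have hcap := hcoh.sum_inner_sq_le hμ (T := J i₀ \ S) (δ := 0.1) (by norm_num)
    (by rw [hcard₀]; linarith) e
  have hsum := sum_lt_sum_of_nonempty (card_pos.1 (hcard₀ ▸ hk)) hW
  rw [sum_const, hcard₀, nsmul_eq_mul, ← mul_sum] at hsum
  nlinarith

end IsRun

end OMP

section Matrix

variable {m d : ℕ}

theorem l2_eq_norm (v : Fin m → ℝ) : l2 v = ‖WithLp.toLp 2 v‖ := by
  simp [l2, EuclideanSpace.norm_eq]

theorem sum_mul_eq_inner (u v : Fin m → ℝ) :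
    ∑ l, u l * v l = ⟪WithLp.toLp 2 u, WithLp.toLp 2 v⟫ := by
  simp [EuclideanSpace.inner_toLp_toLp, dotProduct, mul_comm]

theorem toLp_sub_mulVec (A : Matrix (Fin m) (Fin d) ℝ) (h : Fin m → ℝ) (x : Fin d → ℝ) :
    WithLp.toLp 2 (h - A.mulVec x)
      = OMP.residual (fun j => WithLp.toLp 2 fun l => A l j) (WithLp.toLp 2 h) x := by
  refine PiLp.ext fun l => ?_
  simp [OMP.residual, Matrix.mulVec, dotProduct, mul_comm]

end Matrix

/-- Theorem 2, guarantee for Orthogonal Matching Pursuit.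
The OMP run is modeled by the sequence of selected-index sets `J i` and
intermediate solutions `ysol i`; `ysol (2*k)` is the output `ŷ`. -/
theorem stmt_1 {d m k : ℕ} (hk : 0 < k)
    (A : Matrix (Fin m) (Fin d) ℝ) (h : Fin m → ℝ)
    (hcols : ∀ j : Fin d, l2 (fun i => A i j) = 1)
    (hcoh : ∀ j j' : Fin d, j ≠ j' → |∑ i, A i j * A i j'| ≤ 0.1 / (k : ℝ))
    (J : ℕ → Finset (Fin d)) (ysol : ℕ → Fin d → ℝ)
    (hJ0 : J 0 = ∅) (hy0 : ysol 0 = 0)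
    (hstep : ∀ i < 2 * k, ∃ jstar : Fin d,
      (∀ j : Fin d, |∑ l, A l j * (h - A.mulVec (ysol i)) l| ≤
        |∑ l, A l jstar * (h - A.mulVec (ysol i)) l|) ∧
      J (i + 1) = insert jstar (J i) ∧
      (∀ c : Fin d, c ∉ J (i + 1) → ysol (i + 1) c = 0) ∧
      (∀ z : Fin d → ℝ, (∀ c : Fin d, c ∉ J (i + 1) → z c = 0) →
        l2 (A.mulVec (ysol (i + 1)) - h) ≤ l2 (A.mulVec z - h))) :
    ∀ y z : Fin d → ℝ, IsBestApprox k y z →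
      l2 (A.mulVec (ysol (2 * k)) - h) ^ 2 ≤ 23 * l2 (A.mulVec z - h) ^ 2 := by
  rintro y z ⟨S, hS, -, hzS⟩
  set a : Fin d → EuclideanSpace ℝ (Fin m) := fun j => WithLp.toLp 2 fun l => A l j
  have hres : ∀ x, l2 (A.mulVec x - h) = ‖OMP.residual a (WithLp.toLp 2 h) x‖ := fun x => by
    rw [l2_eq_norm, ← norm_neg, ← WithLp.toLp_neg, neg_sub, toLp_sub_mulVec]
  have hcorr : ∀ x j, ∑ l, A l j * (h - A.mulVec x) l = ⟪a j, OMP.residual a (WithLp.toLp 2 h) x⟫ :=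
    fun x j => by rw [sum_mul_eq_inner, toLp_sub_mulVec]
  have run : OMP.IsRun a (WithLp.toLp 2 h) (2 * k) J ysol :=
    ⟨hJ0, hy0, fun i hi => by simpa only [OMP.IsStep, hcorr, hres] using hstep i hi⟩
  have ha : IsCoherent (0.1 / k) a :=
    ⟨fun j => l2_eq_norm _ ▸ hcols j, fun i j hij => sum_mul_eq_inner _ _ ▸ hcoh i j hij⟩
  simpa only [hres] using run.sq_norm_residual_le ha (by positivity)
    (div_mul_cancel₀ _ (Nat.cast_ne_zero.2 hk.ne')).le hk
    (hS ▸ min_le_left k d) fun c hc => by simp [hzS, hc]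
end

section
/- Let A = [a₁ | … | a_d] ∈ ℝ^{m×d} have unit ℓ₂-norm columns, let k ≥ 2, let δ ∈ (0,1), and suppose the coherence satisfies μ(A) ≤ δ/(k−1). Then for every k-sparse vector y ∈ ℝ^d, ‖Ay‖₂² ≥ (1 − δ)·‖y‖₂². -/
open Real MeasureTheory ProbabilityTheory

/-!
Expanding `‖Ay‖²` as the quadratic form of the Gram matrix `AᵀA`, the diagonal contributes
`‖y‖²` and each off-diagonal entry is at least `-μ |y_j| |y_j'|`, so
`‖Ay‖² ≥ (1 + μ)‖y‖² - μ‖y‖₁²`. For a `k`-sparse `y`, Cauchy–Schwarz on its support gives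
`‖y‖₁² ≤ k ‖y‖²`, hence `‖Ay‖² ≥ (1 - (k - 1)μ)‖y‖² = (1 - δ)‖y‖²` when `μ = δ / (k - 1)`.
-/

lemma l2_sq {n : ℕ} (v : Fin n → ℝ) : l2 v ^ 2 = ∑ i, v i ^ 2 :=
  Real.sq_sqrt (Finset.sum_nonneg fun _ _ => sq_nonneg _)

section GramBound

variable {ι κ : Type*} [Fintype ι] [Fintype κ]

lemma sum_sq_mulVec_eq_sum_gram (A : Matrix ι κ ℝ) (y : κ → ℝ) :
    ∑ i, A.mulVec y i ^ 2 = ∑ j, ∑ j', y j * y j' * ∑ i, A i j * A i j' := by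
  simp only [Matrix.mulVec, dotProduct, sq, Finset.sum_mul, Finset.mul_sum]
  rw [Finset.sum_comm]
  refine Finset.sum_congr rfl fun j _ => ?_
  rw [Finset.sum_comm]
  exact Finset.sum_congr rfl fun j' _ => Finset.sum_congr rfl fun i _ => by ring

lemma sum_sq_mulVec_ge_of_coherence_le [DecidableEq κ] {A : Matrix ι κ ℝ} {μ : ℝ}
    (hcols : ∀ j, ∑ i, A i j ^ 2 = 1)
    (hcoh : ∀ j j', j ≠ j' → |∑ i, A i j * A i j'| ≤ μ) (y : κ → ℝ) :
    (1 + μ) * ∑ j, y j ^ 2 - μ * (∑ j, |y j|) ^ 2 ≤ ∑ i, A.mulVec y i ^ 2 := by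
  have hterm : ∀ j j', (if j = j' then (1 + μ) * y j ^ 2 else 0) - μ * (|y j| * |y j'|)
      ≤ y j * y j' * ∑ i, A i j * A i j' := by
    intro j j'
    by_cases hjj' : j = j'
    · subst hjj'
      simp only [if_true, ← sq, sq_abs, hcols j]
      linarith
    · have hbound : |y j * y j' * ∑ i, A i j * A i j'| ≤ |y j| * |y j'| * μ := by
        rw [abs_mul, abs_mul]
        exact mul_le_mul_of_nonneg_left (hcoh j j' hjj') (by positivity)
      rw [if_neg hjj', zero_sub, mul_comm μ]
      exact neg_le_of_abs_le hbound
  calc (1 + μ) * ∑ j, y j ^ 2 - μ * (∑ j, |y j|) ^ 2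
      = ∑ j, ∑ j', ((if j = j' then (1 + μ) * y j ^ 2 else 0) - μ * (|y j| * |y j'|)) := by
        simp only [Finset.sum_sub_distrib, Finset.sum_ite_eq, Finset.mem_univ, if_true,
          ← Finset.mul_sum, sq (∑ j, |y j|), Finset.sum_mul_sum]
    _ ≤ ∑ j, ∑ j', y j * y j' * ∑ i, A i j * A i j' :=
        Finset.sum_le_sum fun j _ => Finset.sum_le_sum fun j' _ => hterm j j'
    _ = ∑ i, A.mulVec y i ^ 2 := (sum_sq_mulVec_eq_sum_gram A y).symm

end GramBound

lemma Sparse.l1_sq_le {n k : ℕ} {y : Fin n → ℝ} (hy : Sparse k y) :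
    l1 y ^ 2 ≤ k * l2 y ^ 2 := by
  set T := Finset.univ.filter fun i => y i ≠ 0
  have hl1 : l1 y = ∑ j ∈ T, |y j| :=
    (Finset.sum_filter_of_ne fun j _ hj => abs_ne_zero.mp hj).symm
  have hl2 : l2 y ^ 2 = ∑ j ∈ T, |y j| ^ 2 := by
    rw [l2_sq]
    simp only [sq_abs]
    exact (Finset.sum_filter_of_ne fun j _ hj => pow_ne_zero_iff two_ne_zero |>.mp hj).symm
  rw [hl1, hl2]
  calc (∑ j ∈ T, |y j|) ^ 2 ≤ T.card * ∑ j ∈ T, |y j| ^ 2 := sq_sum_le_card_mul_sum_sq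
    _ ≤ k * ∑ j ∈ T, |y j| ^ 2 :=
        mul_le_mul_of_nonneg_right (by exact_mod_cast hy)
          (Finset.sum_nonneg fun j _ => sq_nonneg _)

theorem stmt_5_general {m d k : ℕ} (hk : 2 ≤ k)
    (A : Matrix (Fin m) (Fin d) ℝ)
    (hcols : ∀ j : Fin d, l2 (fun i => A i j) = 1)
    {δ : ℝ} (hδ0 : 0 < δ)
    (hcoh : ∀ j j' : Fin d, j ≠ j' → |∑ i, A i j * A i j'| ≤ δ / ((k : ℝ) - 1)) :
    ∀ y : Fin d → ℝ, Sparse k y → (1 - δ) * l2 y ^ 2 ≤ l2 (A.mulVec y) ^ 2 := by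
  intro y hy
  have hk1 : (0 : ℝ) < k - 1 := by
    have : (2 : ℝ) ≤ k := by exact_mod_cast hk
    linarith
  set μ := δ / ((k : ℝ) - 1)
  have hμk : μ * (k - 1) = δ := div_mul_cancel₀ δ hk1.ne'
  have hcols' : ∀ j, ∑ i, A i j ^ 2 = 1 := fun j => by rw [← l2_sq, hcols j, one_pow]
  have hgram := sum_sq_mulVec_ge_of_coherence_le hcols' hcoh y
  rw [← l2_sq, ← l2_sq, ← l1] at hgram
  have hl1 : μ * l1 y ^ 2 ≤ μ * (k * l2 y ^ 2) :=
    mul_le_mul_of_nonneg_left hy.l1_sq_le (div_nonneg hδ0.le hk1.le)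
  calc (1 - δ) * l2 y ^ 2 = (1 + μ) * l2 y ^ 2 - μ * (k * l2 y ^ 2) := by rw [← hμk]; ring
    _ ≤ (1 + μ) * l2 y ^ 2 - μ * l1 y ^ 2 := by linarith
    _ ≤ l2 (A.mulVec y) ^ 2 := hgram

/-- Lemma 2, low coherence implies near-isometry on sparse vectors. -/
theorem stmt_5 {m d k : ℕ} (hk : 2 ≤ k)
    (A : Matrix (Fin m) (Fin d) ℝ)
    (hcols : ∀ j : Fin d, l2 (fun i => A i j) = 1)
    {δ : ℝ} (hδ0 : 0 < δ) (hδ1 : δ < 1)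
    (hcoh : ∀ j j' : Fin d, j ≠ j' → |∑ i, A i j * A i j'| ≤ δ / ((k : ℝ) - 1)) :
    ∀ y : Fin d → ℝ, Sparse k y → (1 - δ) * l2 y ^ 2 ≤ l2 (A.mulVec y) ^ 2 :=
  stmt_5_general hk A hcols hδ0 hcoh
end

section
/- Let y ∈ ℝ^d have coordinates sorted by magnitude, |y₁| ≥ |y₂| ≥ … ≥ |y_d|, let k ≥ 0 and ℓ ≥ 1 be integers, and let Δ = y − y_{(1:k)} (the vector retaining only coordinates k+1,…,d of y). Partition the indices {k+1, …, d} into consecutive blocks J₀, J₁, J₂, … each of size ℓ (the last block possibly smaller), and for an index set J let y_J denote the vector agreeing with y on J and zero elsewhere. Then Σ_{i ≥ 0} ‖y_{J_i}‖₂ ≤ ‖Δ‖₂ + ℓ^{−1/2}·‖Δ‖₁. -/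
open Real MeasureTheory ProbabilityTheory

/-! `J₀` lies in the support of `Δ`, so `‖y_{J₀}‖₂ ≤ ‖Δ‖₂`. If `J_{i+1}` is nonempty then `J_i` is
a full block of `ℓ` coordinates, each at least as large in magnitude as every coordinate of
`J_{i+1}`; hence the at most `ℓ` entries of `y_{J_{i+1}}` are bounded by the mean `‖y_{J_i}‖₁ / ℓ`,
and `‖y_{J_{i+1}}‖₂ ≤ ℓ^{-1/2} ‖y_{J_i}‖₁`. The blocks are disjoint subsets of the support of `Δ`,
so `∑ ‖y_{J_i}‖₁ ≤ ‖Δ‖₁`. -/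

open Finset Function

section Norms

variable {n : ℕ}

theorem l2_indicator (s : Finset (Fin n)) (v : Fin n → ℝ) :
    l2 ((s : Set (Fin n)).indicator v) = √(∑ j ∈ s, v j ^ 2) := by
  simp [l2, Set.indicator_apply, ite_pow, sum_ite_mem]

theorem l1_indicator (s : Finset (Fin n)) (v : Fin n → ℝ) :
    l1 ((s : Set (Fin n)).indicator v) = ∑ j ∈ s, |v j| := by
  simp [l1, Set.indicator_apply, apply_ite, sum_ite_mem]

theorem l2_indicator_le (s : Finset (Fin n)) (v : Fin n → ℝ) :
    l2 ((s : Set (Fin n)).indicator v) ≤ l2 v := by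
  rw [l2_indicator]
  exact Real.sqrt_le_sqrt <| sum_le_sum_of_subset_of_nonneg (subset_univ s)
    fun j _ _ => sq_nonneg (v j)

theorem sum_l1_indicator_le {ι : Type*} (I : Finset ι) (J : ι → Finset (Fin n))
    (hJ : Pairwise (Disjoint on J)) (v : Fin n → ℝ) :
    ∑ i ∈ I, l1 ((J i : Set (Fin n)).indicator v) ≤ l1 v := by
  simp only [l1_indicator]
  rw [← sum_biUnion (hJ.set_pairwise _)]
  exact sum_le_sum_of_subset_of_nonneg (subset_univ _) fun j _ _ => abs_nonneg (v j)

end Norms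

theorem sqrt_sum_sq_le_one_div_sqrt_mul_sum_abs {ι : Type*} (f : ι → ℝ) (s t : Finset ι) (ℓ : ℕ)
    (ht : #t ≤ ℓ) (hs : t.Nonempty → ℓ ≤ #s) (hle : ∀ j ∈ t, ∀ i ∈ s, |f j| ≤ |f i|) :
    √(∑ j ∈ t, f j ^ 2) ≤ 1 / √ℓ * ∑ i ∈ s, |f i| := by
  rcases t.eq_empty_or_nonempty with rfl | htne
  · simp only [sum_empty, Real.sqrt_zero]
    exact mul_nonneg (by positivity) (sum_nonneg fun i _ => abs_nonneg (f i))
  set A := ∑ i ∈ s, |f i|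
  have hℓ : (0 : ℝ) < ℓ := by exact_mod_cast htne.card_pos.trans_le ht
  have hentry : ∀ j ∈ t, |f j| ≤ A / ℓ := fun j hj => by
    rw [le_div_iff₀ hℓ]
    calc |f j| * ℓ ≤ |f j| * #s :=
          mul_le_mul_of_nonneg_left (by exact_mod_cast hs htne) (abs_nonneg _)
      _ = ∑ _i ∈ s, |f j| := by rw [sum_const, nsmul_eq_mul, mul_comm]
      _ ≤ A := sum_le_sum (hle j hj)
  have hsq : ∑ j ∈ t, f j ^ 2 ≤ (1 / √ℓ * A) ^ 2 :=
    calc ∑ j ∈ t, f j ^ 2 ≤ ∑ _j ∈ t, (A / ℓ) ^ 2 := sum_le_sum fun j hj => by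
          rw [← sq_abs]; exact pow_le_pow_left₀ (abs_nonneg _) (hentry j hj) 2
      _ = #t * (A / ℓ) ^ 2 := by rw [sum_const, nsmul_eq_mul]
      _ ≤ ℓ * (A / ℓ) ^ 2 := by gcongr
      _ = (1 / √ℓ * A) ^ 2 := by
          rw [mul_pow, div_pow, div_pow, one_pow, Real.sq_sqrt hℓ.le]; field_simp
  have hA : 0 ≤ A := sum_nonneg fun i _ => abs_nonneg (f i)
  exact Real.sqrt_le_iff.mpr ⟨by positivity, hsq⟩

section Blocks

variable {d : ℕ}

def block (d k ℓ i : ℕ) : Finset (Fin d) :=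
  univ.filter fun j => k + i * ℓ ≤ (j : ℕ) ∧ (j : ℕ) < k + (i + 1) * ℓ

theorem mem_block {k ℓ i : ℕ} {j : Fin d} :
    j ∈ block d k ℓ i ↔ k + i * ℓ ≤ (j : ℕ) ∧ (j : ℕ) < k + (i + 1) * ℓ := by
  simp [block]

theorem card_block (k ℓ i : ℕ) : #(block d k ℓ i) = min (k + (i + 1) * ℓ) d - (k + i * ℓ) := by
  rw [← card_map Fin.valEmbedding, ← Nat.card_Ico]
  congr 1
  ext m
  simp only [mem_map, mem_block, Fin.valEmbedding_apply, mem_Ico, lt_min_iff]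
  exact ⟨fun ⟨a, ha, e⟩ => e ▸ ⟨ha.1, ha.2, a.isLt⟩, fun ⟨h1, h2, h3⟩ => ⟨⟨m, h3⟩, ⟨h1, h2⟩, rfl⟩⟩

theorem pairwise_disjoint_block (k ℓ : ℕ) : Pairwise (Disjoint on block d k ℓ) := by
  suffices h : ∀ a b, a < b → Disjoint (block d k ℓ a) (block d k ℓ b) from
    fun a b hab => hab.lt_or_gt.elim (h a b) fun hba => (h b a hba).symm
  intro a b hab
  have : (a + 1) * ℓ ≤ b * ℓ := Nat.mul_le_mul_right ℓ hab
  exact disjoint_left.mpr fun j hja hjb => by rw [mem_block] at hja hjb; omega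

theorem card_block_le (k ℓ i : ℕ) : #(block d k ℓ i) ≤ ℓ := by
  rw [card_block, add_one_mul]
  omega

theorem card_block_of_nonempty_succ {k ℓ i : ℕ} (h : (block d k ℓ (i + 1)).Nonempty) :
    #(block d k ℓ i) = ℓ := by
  obtain ⟨j, hj⟩ := h
  have := j.isLt
  rw [mem_block] at hj
  rw [card_block]
  simp only [add_one_mul] at hj ⊢
  omega

theorem val_le_of_mem_block_of_mem_block_succ {k ℓ i : ℕ} {j j' : Fin d}
    (hj : j ∈ block d k ℓ i) (hj' : j' ∈ block d k ℓ (i + 1)) : j ≤ j' := by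
  rw [mem_block] at hj hj'
  exact Fin.le_iff_val_le_val.mpr (by omega)

end Blocks

theorem stmt_8_general {d : ℕ} (y : Fin d → ℝ)
    (hsorted : ∀ i j : Fin d, i ≤ j → |y j| ≤ |y i|)
    (k ℓ : ℕ)
    (Δ : Fin d → ℝ) (hΔ : ∀ j : Fin d, Δ j = if (j : ℕ) < k then 0 else y j)
    (yblock : ℕ → Fin d → ℝ)
    (hblock : ∀ (i : ℕ) (j : Fin d),
      yblock i j = if k + i * ℓ ≤ (j : ℕ) ∧ (j : ℕ) < k + (i + 1) * ℓ then y j else 0) :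
    ∑ i ∈ Finset.range d, l2 (yblock i) ≤ l2 Δ + (1 / Real.sqrt ℓ) * l1 Δ := by
  have hy : ∀ i, yblock i = (block d k ℓ i : Set (Fin d)).indicator y := fun i =>
    funext fun j => by simp only [hblock, Set.indicator_apply, mem_coe, mem_block]
  have hΔy : ∀ i, yblock i = (block d k ℓ i : Set (Fin d)).indicator Δ := fun i => by
    refine (hy i).trans (Set.indicator_congr fun j hj => ?_)
    rw [mem_coe, mem_block] at hj
    rw [hΔ, if_neg (by omega)]
  have head : l2 (yblock 0) ≤ l2 Δ := hΔy 0 ▸ l2_indicator_le _ Δ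
  have tail : ∀ i, l2 (yblock (i + 1)) ≤ 1 / √ℓ * l1 (yblock i) := fun i => by
    rw [hy, hy, l2_indicator, l1_indicator]
    exact sqrt_sum_sq_le_one_div_sqrt_mul_sum_abs y _ _ ℓ (card_block_le k ℓ _)
      (fun h => (card_block_of_nonempty_succ h).ge)
      fun j hj i hi => hsorted _ _ (val_le_of_mem_block_of_mem_block_succ hi hj)
  calc ∑ i ∈ range d, l2 (yblock i) ≤ ∑ i ∈ range (d + 1), l2 (yblock i) :=
        sum_le_sum_of_subset_of_nonneg (range_subset_range.mpr d.le_succ)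
          fun _ _ _ => Real.sqrt_nonneg _
    _ = l2 (yblock 0) + ∑ i ∈ range d, l2 (yblock (i + 1)) := by
        rw [sum_range_succ', add_comm]
    _ ≤ l2 Δ + ∑ i ∈ range d, 1 / √ℓ * l1 (yblock i) :=
        add_le_add head (sum_le_sum fun i _ => tail i)
    _ ≤ l2 Δ + 1 / √ℓ * l1 Δ := by
        rw [← mul_sum]
        simp only [hΔy]
        gcongr
        exact sum_l1_indicator_le _ _ (pairwise_disjoint_block k ℓ) Δ

/-- block decomposition bound used in the proof of Theorem 1.
Coordinates are 0-indexed: sortedness means `|y 0| ≥ |y 1| ≥ …`, the head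
`y_{(1:k)}` keeps coordinates `0,…,k−1`, and block `J i` consists of the
coordinates `j` with `k + i*ℓ ≤ j < k + (i+1)*ℓ`.  Summing over
`i ∈ range d` covers all nonempty blocks since `ℓ ≥ 1`. -/
theorem stmt_8 {d : ℕ} (y : Fin d → ℝ)
    (hsorted : ∀ i j : Fin d, i ≤ j → |y j| ≤ |y i|)
    (k ℓ : ℕ) (hℓ : 1 ≤ ℓ)
    (Δ : Fin d → ℝ) (hΔ : ∀ j : Fin d, Δ j = if (j : ℕ) < k then 0 else y j)
    (yblock : ℕ → Fin d → ℝ)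
    (hblock : ∀ (i : ℕ) (j : Fin d),
      yblock i j = if k + i * ℓ ≤ (j : ℕ) ∧ (j : ℕ) < k + (i + 1) * ℓ then y j else 0) :
    ∑ i ∈ Finset.range d, l2 (yblock i) ≤ l2 Δ + (1 / Real.sqrt ℓ) * l1 Δ :=
  stmt_8_general y hsorted k ℓ Δ hΔ yblock hblock
end

section
/- Let d, m, k, s be positive integers, let δ ∈ (0,1), and let C > 0. Let A ∈ ℝ^{m×d} satisfy the (k+s, δ)-restricted isometry property, let h ∈ ℝ^m, and let y ∈ ℝ^d be arbitrary, with Δ = y − y_{(1:k)}. Suppose ŷ ∈ ℝ^d is s-sparse and satisfies ‖Aŷ − h‖₂² ≤ C·‖A y_{(1:k)} − h‖₂². Then ‖ŷ − y‖₂ ≤ (1−δ)^{−1/2}·(1+√C)·( ‖Ay − h‖₂ + ‖AΔ‖₂ ) + ‖Δ‖₂. -/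
open Real MeasureTheory ProbabilityTheory

lemma l2_nonneg' {n : ℕ} (v : Fin n → ℝ) : 0 ≤ l2 v := Real.sqrt_nonneg _

lemma l2_eq_norm_s10 {n : ℕ} (v : Fin n → ℝ) :
    l2 v = ‖(WithLp.equiv 2 (Fin n → ℝ)).symm v‖ := by
  simp [l2, EuclideanSpace.norm_eq, sq_abs]

lemma l2_neg {n : ℕ} (v : Fin n → ℝ) : l2 (-v) = l2 v := by
  simp [l2, neg_sq]

lemma l2_sub_triangle {n : ℕ} (a b c : Fin n → ℝ) :
    l2 (a - c) ≤ l2 (a - b) + l2 (b - c) := by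
  simp only [l2_eq_norm_s10]
  exact dist_triangle ((WithLp.equiv 2 (Fin n → ℝ)).symm a)
    ((WithLp.equiv 2 (Fin n → ℝ)).symm b) ((WithLp.equiv 2 (Fin n → ℝ)).symm c)

lemma l2_neg_sub {n : ℕ} (a b : Fin n → ℝ) : l2 (a - b) = l2 (b - a) := by
  unfold l2
  congr 1
  apply Finset.sum_congr rfl
  intro i _
  have : (a - b) i = -((b - a) i) := by simp
  rw [this]; ring

/-- intermediate inequality in the proof of Theorem 1. Here
`z = y_{(1:k)}` is a best `k`-sparse approximation of the given `y`, and
`Δ = y − y_{(1:k)}`. -/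
theorem stmt_10 {d m k s : ℕ} (hd : 0 < d) (hm : 0 < m) (hk : 0 < k) (hs : 0 < s)
    {δ C : ℝ} (hδ0 : 0 < δ) (hδ1 : δ < 1) (hC : 0 < C)
    (A : Matrix (Fin m) (Fin d) ℝ) (hA : RIP (k + s) δ A)
    (h : Fin m → ℝ) (yhat : Fin d → ℝ) (hyhat : Sparse s yhat)
    (y z : Fin d → ℝ) (hz : IsBestApprox k y z)
    (hopt : l2 (A.mulVec yhat - h) ^ 2 ≤ C * l2 (A.mulVec z - h) ^ 2) :
    l2 (yhat - y) ≤
      ((1 - δ) : ℝ) ^ (-(1/2 : ℝ)) * (1 + Real.sqrt C) *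
        (l2 (A.mulVec y - h) + l2 (A.mulVec (y - z))) + l2 (y - z) := by
  obtain ⟨S, hScard, -, hzdef⟩ := hz
  have h1δ : (0:ℝ) < 1 - δ := by linarith
  -- z is k-sparse
  have hzsp : Sparse k z := by
    have hsub : (Finset.univ.filter fun i => z i ≠ 0) ⊆ S := by
      intro i hi
      simp only [Finset.mem_filter] at hi
      by_contra hiS
      exact hi.2 (by rw [hzdef i, if_neg hiS])
    calc (Finset.univ.filter fun i => z i ≠ 0).card ≤ S.card := Finset.card_le_card hsub
      _ = min k d := hScard
      _ ≤ k := min_le_left _ _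
  -- yhat - z is (k+s)-sparse
  have hsp : Sparse (k + s) (yhat - z) := by
    have hsub : (Finset.univ.filter fun i => (yhat - z) i ≠ 0) ⊆
        (Finset.univ.filter fun i => z i ≠ 0) ∪ (Finset.univ.filter fun i => yhat i ≠ 0) := by
      intro i hi
      simp only [Finset.mem_filter, Finset.mem_union, Finset.mem_univ, true_and,
        Pi.sub_apply] at hi ⊢
      by_contra hcon
      push_neg at hcon
      exact hi (by rw [hcon.1, hcon.2, sub_zero])
    calc (Finset.univ.filter fun i => (yhat - z) i ≠ 0).card
        ≤ ((Finset.univ.filter fun i => z i ≠ 0) ∪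
            (Finset.univ.filter fun i => yhat i ≠ 0)).card := Finset.card_le_card hsub
      _ ≤ (Finset.univ.filter fun i => z i ≠ 0).card +
            (Finset.univ.filter fun i => yhat i ≠ 0).card := Finset.card_union_le _ _
      _ ≤ k + s := Nat.add_le_add hzsp hyhat
  -- RIP lower bound
  have hrip := (hA (yhat - z) hsp).1
  -- ℓ₂ distance bounds
  have hAlin : A.mulVec (yhat - z) = (A.mulVec yhat - h) - (A.mulVec z - h) := by
    rw [Matrix.mulVec_sub]; abel
  have hAlin2 : A.mulVec z - h = (A.mulVec y - h) - A.mulVec (y - z) := by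
    rw [Matrix.mulVec_sub]; abel
  set az := l2 (A.mulVec z - h) with haz
  have haz0 : 0 ≤ az := l2_nonneg' _
  -- from hopt : l2 (A yhat - h) ≤ √C * az
  have h3 : l2 (A.mulVec yhat - h) ≤ Real.sqrt C * az := by
    have := Real.sqrt_le_sqrt hopt
    rwa [Real.sqrt_sq (l2_nonneg' _), Real.sqrt_mul hC.le, Real.sqrt_sq haz0] at this
  have hsuble : ∀ (a b : Fin m → ℝ), l2 (a - b) ≤ l2 a + l2 b := by
    intro a b
    have := l2_sub_triangle a 0 b
    simpa [l2_neg b] using this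
  have h4 : l2 (A.mulVec (yhat - z)) ≤ (1 + Real.sqrt C) * az := by
    have htr : l2 (A.mulVec (yhat - z)) ≤ l2 (A.mulVec yhat - h) + az := by
      rw [hAlin]; exact hsuble _ _
    nlinarith
  have h5 : az ≤ l2 (A.mulVec y - h) + l2 (A.mulVec (y - z)) := by
    rw [haz, hAlin2]; exact hsuble _ _
  have hc : ((1 - δ) : ℝ) ^ (-(1/2 : ℝ)) = (Real.sqrt (1 - δ))⁻¹ := by
    rw [Real.rpow_neg h1δ.le, Real.sqrt_eq_rpow]
  have hsqpos : (0:ℝ) < Real.sqrt (1 - δ) := Real.sqrt_pos.mpr h1δ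
  have hcpos : (0:ℝ) < (Real.sqrt (1 - δ))⁻¹ := by positivity
  have hs1 : Real.sqrt (1 - δ) * l2 (yhat - z) ≤ l2 (A.mulVec (yhat - z)) := by
    have h2 : (Real.sqrt (1 - δ) * l2 (yhat - z)) ^ 2 ≤ l2 (A.mulVec (yhat - z)) ^ 2 := by
      rw [mul_pow, Real.sq_sqrt h1δ.le]; exact hrip
    have := Real.sqrt_le_sqrt h2
    rwa [Real.sqrt_sq (mul_nonneg hsqpos.le (l2_nonneg' _)), Real.sqrt_sq (l2_nonneg' _)] at this
  have h6 : l2 (yhat - z) ≤ (Real.sqrt (1 - δ))⁻¹ * l2 (A.mulVec (yhat - z)) := by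
    have := mul_le_mul_of_nonneg_left hs1 hcpos.le
    rwa [← mul_assoc, inv_mul_cancel₀ hsqpos.ne', one_mul] at this
  have htri : l2 (yhat - y) ≤ l2 (yhat - z) + l2 (y - z) := by
    have := l2_sub_triangle yhat z y
    rwa [l2_neg_sub z y] at this
  rw [hc]
  have hCnn : (0:ℝ) ≤ 1 + Real.sqrt C := by positivity
  calc l2 (yhat - y) ≤ l2 (yhat - z) + l2 (y - z) := htri
    _ ≤ (Real.sqrt (1 - δ))⁻¹ *
          ((1 + Real.sqrt C) * (l2 (A.mulVec y - h) + l2 (A.mulVec (y - z)))) + l2 (y - z) := by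
        refine add_le_add ?_ le_rfl
        calc l2 (yhat - z) ≤ (Real.sqrt (1 - δ))⁻¹ * l2 (A.mulVec (yhat - z)) := h6
          _ ≤ (Real.sqrt (1 - δ))⁻¹ * ((1 + Real.sqrt C) * az) :=
              mul_le_mul_of_nonneg_left h4 hcpos.le
          _ ≤ (Real.sqrt (1 - δ))⁻¹ *
              ((1 + Real.sqrt C) * (l2 (A.mulVec y - h) + l2 (A.mulVec (y - z)))) :=
              mul_le_mul_of_nonneg_left (mul_le_mul_of_nonneg_left h5 hCnn) hcpos.le
    _ = (Real.sqrt (1 - δ))⁻¹ * (1 + Real.sqrt C) *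
          (l2 (A.mulVec y - h) + l2 (A.mulVec (y - z))) + l2 (y - z) := by ring
end
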